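/- Suppose Assumption (S1) holds with some q ≥ 1 and 0 < α ≤ 1, and the kernel assumption holds. Then there is a constant C > 0 such that for all n ∈ ℕ, all b ∈ (0,1) with nb ≥ 1, and all u ∈ [0,1]: | (1/n) Σ_{t=1}^n K_b(t/n − u) (E X_{t,n} − E X̃_t(t/n)) | ≤ C n^{−α}, and | (1/n) Σ_{t=1}^n K_b(t/n − u) (E X̃_t(t/n) − E X̃_0(u)) | ≤ C (b^α + n^{−1}). -/

import Mathlib

/-!
Both bounds come from one counting estimate: `K_b(t/n - u)` vanishes unless
`|t/n - u| ≤ b/2`, which holds for at most `nb + 1 ≤ 2nb` indices `t`, each weighted by at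
most `|K|_∞ / b`; hence `(1/n) ∑ K_b(t/n - u) d_t ≤ 2 |K|_∞ max |d_t|`, the maximum taken over
those `t`. In the first sum `|d_t| ≤ ‖X_{t,n} - X̃_t(t/n)‖_1 ≤ C_B n^{-α}`. In the second,
stationarity replaces `E X̃_t(t/n)` by `E X̃_0(t/n)`, and Hölder continuity in `u` gives
`|d_t| ≤ C_B |t/n - u|^α ≤ C_B b^α`.
-/

open MeasureTheory Filter Set

noncomputable section

/-- The two-sided shift on `ℤ → ℝ`. -/
def shiftZ : (ℤ → ℝ) → (ℤ → ℝ) := fun x t => x (t + 1)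

/-- Stationarity and ergodicity of a real-valued process indexed by `ℤ`. -/
def StatErg {Ω : Type*} [MeasurableSpace Ω] (μ : Measure Ω) (X : ℤ → Ω → ℝ) : Prop :=
  Ergodic shiftZ (Measure.map (fun ω t => X t ω) μ)

/-- The localizing-kernel assumption. -/
structure KernelAssumption (K : ℝ → ℝ) (Kinf BK : ℝ) : Prop where
  pos : 0 < Kinf
  bound : ∀ x, |K x| ≤ Kinf
  bv : eVariationOn K Set.univ ≤ ENNReal.ofReal BK
  supp : Function.support K ⊆ Set.Icc (-(1/2) : ℝ) (1/2)
  int_one : (∫ x, K x) = 1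

open ProbabilityTheory

lemma shiftZ_iterate_apply (k : ℕ) (x : ℤ → ℝ) (s : ℤ) : shiftZ^[k] x s = x (s + k) := by
  induction k generalizing x s with
  | zero => simp
  | succ k ih =>
    rw [Function.iterate_succ_apply, ih, shiftZ]
    push_cast
    ring_nf

lemma MeasureTheory.MeasurePreserving.identDistrib_shiftZ {Ω : Type*} [MeasurableSpace Ω]
    {μ : Measure Ω} {Y : ℤ → Ω → ℝ} (hY : ∀ t, Measurable (Y t))
    (h : MeasurePreserving shiftZ (μ.map fun ω t => Y t ω) (μ.map fun ω t => Y t ω)) (k : ℕ) :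
    IdentDistrib (Y k) (Y 0) μ μ where
  aemeasurable_fst := (hY k).aemeasurable
  aemeasurable_snd := (hY 0).aemeasurable
  map_eq := by
    have hφ : Measurable fun ω t => Y t ω := measurable_pi_lambda _ hY
    have hshift : (fun x : ℤ → ℝ => x k) = (fun x => x 0) ∘ shiftZ^[k] := by
      funext x; simp [shiftZ_iterate_apply]
    calc μ.map (Y k) = (μ.map fun ω t => Y t ω).map fun x => x k :=
          (Measure.map_map (measurable_pi_apply _) hφ).symm
      _ = ((μ.map fun ω t => Y t ω).map shiftZ^[k]).map fun x => x 0 := by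
          rw [hshift, Measure.map_map (measurable_pi_apply _) (h.iterate k).measurable]
      _ = μ.map (Y 0) := by
          rw [(h.iterate k).map_eq]; exact Measure.map_map (measurable_pi_apply _) hφ

section LqBounds

variable {Ω : Type*} [MeasurableSpace Ω] {μ : Measure Ω} [IsProbabilityMeasure μ] {q M : ℝ}

lemma integrable_of_eLpNorm_le {W : Ω → ℝ} (hW : AEStronglyMeasurable W μ) (hq : 1 ≤ q)
    (h : eLpNorm W (ENNReal.ofReal q) μ ≤ ENNReal.ofReal M) : Integrable W μ :=
  MemLp.integrable (ENNReal.one_le_ofReal.mpr hq) ⟨hW, h.trans_lt ENNReal.ofReal_lt_top⟩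

lemma abs_integral_le_of_eLpNorm_le {W : Ω → ℝ} (hW : AEStronglyMeasurable W μ) (hq : 1 ≤ q)
    (hM : 0 ≤ M) (h : eLpNorm W (ENNReal.ofReal q) μ ≤ ENNReal.ofReal M) :
    |∫ ω, W ω ∂μ| ≤ M := by
  have hL1 : ‖∫ ω, W ω ∂μ‖ₑ ≤ ENNReal.ofReal M :=
    calc ‖∫ ω, W ω ∂μ‖ₑ ≤ eLpNorm W 1 μ := by
          rw [eLpNorm_one_eq_lintegral_enorm]; exact enorm_integral_le_lintegral_enorm W
      _ ≤ eLpNorm W (ENNReal.ofReal q) μ :=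
          eLpNorm_le_eLpNorm_of_exponent_le (ENNReal.one_le_ofReal.mpr hq) hW
      _ ≤ ENNReal.ofReal M := h
  rw [← Real.norm_eq_abs, ← ENNReal.ofReal_le_ofReal_iff hM, ofReal_norm]
  exact hL1

lemma abs_integral_sub_integral_le_of_eLpNorm_sub_le {f g : Ω → ℝ}
    (hf : AEStronglyMeasurable f μ) (hg : Integrable g μ) (hq : 1 ≤ q) (hM : 0 ≤ M)
    (h : eLpNorm (fun ω => f ω - g ω) (ENNReal.ofReal q) μ ≤ ENNReal.ofReal M) :
    |(∫ ω, f ω ∂μ) - ∫ ω, g ω ∂μ| ≤ M := by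
  have hfg : Integrable (fun ω => f ω - g ω) μ :=
    integrable_of_eLpNorm_le (hf.sub hg.aestronglyMeasurable) hq h
  have hf' : Integrable f μ := (hfg.add hg).congr (.of_forall fun ω => by simp)
  rw [← integral_sub hf' hg]
  exact abs_integral_le_of_eLpNorm_le (hf.sub hg.aestronglyMeasurable) hq hM h

end LqBounds

lemma card_le_add_one_of_forall_mem_Icc {S : Finset ℕ} {x L : ℝ} (hL : 0 ≤ L)
    (hS : ∀ t ∈ S, (t : ℝ) ∈ Icc x (x + L)) : (S.card : ℝ) ≤ L + 1 := by
  rcases S.eq_empty_or_nonempty with rfl | hne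
  · simpa using hL.trans (le_add_of_nonneg_right zero_le_one)
  have hsub : S ⊆ Finset.Icc (S.min' hne) (S.max' hne) := fun t ht =>
    Finset.mem_Icc.mpr ⟨S.min'_le t ht, S.le_max' t ht⟩
  have hcard : S.card + S.min' hne ≤ S.max' hne + 1 := by
    have hsize := Finset.card_le_card hsub
    have hle := S.min'_le _ (S.max'_mem hne)
    rw [Nat.card_Icc] at hsize
    omega
  have hmin := (hS _ (S.min'_mem hne)).1
  have hmax := (hS _ (S.max'_mem hne)).2
  have hcast : ((S.card + S.min' hne : ℕ) : ℝ) ≤ (S.max' hne + 1 : ℕ) := by exact_mod_cast hcard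
  push_cast at hcast
  linarith

lemma abs_kernel_sum_le {n : ℕ} {b u : ℝ} (hb : 0 < b) (hnb : 1 ≤ (n : ℝ) * b)
    {K : ℝ → ℝ} {Kinf : ℝ} (hK : ∀ x, |K x| ≤ Kinf)
    (hsupp : Function.support K ⊆ Icc (-(1/2) : ℝ) (1/2))
    (d : ℕ → ℝ) {D : ℝ} (hD : 0 ≤ D)
    (hd : ∀ t ∈ Finset.Icc 1 n, |(t : ℝ) / n - u| ≤ b / 2 → |d t| ≤ D) :
    |(n : ℝ)⁻¹ * ∑ t ∈ Finset.Icc 1 n, b⁻¹ * K (((t : ℝ) / n - u) / b) * d t|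
      ≤ 2 * Kinf * D := by
  have hn : (0 : ℝ) < n := by
    rcases Nat.eq_zero_or_pos n with rfl | hn
    · simp at hnb; linarith
    · exact_mod_cast hn
  have hKinf : 0 ≤ Kinf := (abs_nonneg _).trans (hK 0)
  set S := (Finset.Icc 1 n).filter fun t : ℕ => |(t : ℝ) / n - u| ≤ b / 2
  have hloc : ∀ t : ℕ, K (((t : ℝ) / n - u) / b) ≠ 0 → |(t : ℝ) / n - u| ≤ b / 2 := by
    intro t ht
    have habs : |((t : ℝ) / n - u) / b| ≤ 1 / 2 := abs_le.mpr (hsupp ht)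
    rwa [abs_div, abs_of_pos hb, div_le_iff₀ hb, one_div_mul_eq_div] at habs
  have hcard : (S.card : ℝ) ≤ 2 * (n * b) := by
    refine (card_le_add_one_of_forall_mem_Icc (x := n * u - n * b / 2) (L := n * b)
      (by positivity) fun t ht => ?_).trans (by linarith)
    obtain ⟨hl, hr⟩ := abs_le.mp (Finset.mem_filter.mp ht).2
    rw [sub_le_iff_le_add, div_le_iff₀ hn] at hr
    rw [le_sub_iff_add_le, le_div_iff₀ hn] at hl
    constructor <;> nlinarith
  calc |(n : ℝ)⁻¹ * ∑ t ∈ Finset.Icc 1 n, b⁻¹ * K (((t : ℝ) / n - u) / b) * d t|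
      = (n : ℝ)⁻¹ * |∑ t ∈ S, b⁻¹ * K (((t : ℝ) / n - u) / b) * d t| := by
        rw [Finset.sum_filter_of_ne fun t _ ht => hloc t fun h => ht (by simp [h]), abs_mul,
          abs_of_pos (inv_pos.mpr hn)]
    _ ≤ (n : ℝ)⁻¹ * ∑ t ∈ S, b⁻¹ * Kinf * D := by
        gcongr
        refine (Finset.abs_sum_le_sum_abs _ _).trans (Finset.sum_le_sum fun t ht => ?_)
        obtain ⟨ht, htu⟩ := Finset.mem_filter.mp ht
        rw [abs_mul, abs_mul, abs_of_pos (inv_pos.mpr hb)]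
        gcongr
        exacts [hK _, hd t ht htu]
    _ = (n : ℝ)⁻¹ * S.card * b⁻¹ * Kinf * D := by rw [Finset.sum_const, nsmul_eq_mul]; ring
    _ ≤ (n : ℝ)⁻¹ * (2 * (n * b)) * b⁻¹ * Kinf * D := by gcongr
    _ = 2 * Kinf * D := by field_simp

theorem deterministic_bias_general {Ω : Type*} [MeasurableSpace Ω] (μ : Measure Ω)
    [IsProbabilityMeasure μ]
    (X : ℕ → ℕ → Ω → ℝ) (Xt : ℝ → ℤ → Ω → ℝ)
    (hXmeas : ∀ n t, Measurable (X n t))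
    (hXtmeas : ∀ u t, Measurable (Xt u t))
    (hstat : ∀ u ∈ Icc (0:ℝ) 1, StatErg μ (fun t => Xt u t))
    (q : ℝ) (hq : 1 ≤ q)
    (α : ℝ) (hα : 0 < α) (CB : ℝ) (hCB : 0 < CB)
    -- (S1) :
    (hmom : ∃ M : ℝ, ∀ u ∈ Icc (0:ℝ) 1,
      eLpNorm (Xt u 0) (ENNReal.ofReal q) μ ≤ ENNReal.ofReal M)
    (hhoelder : ∀ u ∈ Icc (0:ℝ) 1, ∀ v ∈ Icc (0:ℝ) 1, ∀ t : ℤ,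
      eLpNorm (fun ω => Xt u t ω - Xt v t ω) (ENNReal.ofReal q) μ
        ≤ ENNReal.ofReal (CB * |u - v| ^ α))
    (happrox : ∀ n : ℕ, 1 ≤ n → ∀ t : ℕ, 1 ≤ t → t ≤ n →
      eLpNorm (fun ω => X n t ω - Xt ((t : ℝ) / (n : ℝ)) (t : ℤ) ω) (ENNReal.ofReal q) μ
        ≤ ENNReal.ofReal (CB * (n : ℝ) ^ (-α)))
    -- kernel :
    (K : ℝ → ℝ) (Kinf BK : ℝ) (hK : KernelAssumption K Kinf BK) :
    ∃ C : ℝ, 0 < C ∧ ∀ n : ℕ, 1 ≤ n → ∀ b : ℝ, b ∈ Ioo (0:ℝ) 1 → 1 ≤ (n : ℝ) * b →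
      ∀ u ∈ Icc (0:ℝ) 1,
        |(n : ℝ)⁻¹ * ∑ t ∈ Finset.Icc 1 n, b⁻¹ * K (((t : ℝ) / (n : ℝ) - u) / b)
            * ((∫ ω, X n t ω ∂μ) - ∫ ω, Xt ((t : ℝ) / (n : ℝ)) (t : ℤ) ω ∂μ)|
          ≤ C * (n : ℝ) ^ (-α) ∧
        |(n : ℝ)⁻¹ * ∑ t ∈ Finset.Icc 1 n, b⁻¹ * K (((t : ℝ) / (n : ℝ) - u) / b)
            * ((∫ ω, Xt ((t : ℝ) / (n : ℝ)) (t : ℤ) ω ∂μ) - ∫ ω, Xt u 0 ω ∂μ)|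
          ≤ C * (b ^ α + (n : ℝ)⁻¹) := by
  obtain ⟨M, hM⟩ := hmom
  have hgrid : ∀ n t : ℕ, t ∈ Finset.Icc 1 n → (t : ℝ) / n ∈ Icc (0:ℝ) 1 := fun n t ht =>
    ⟨by positivity, div_le_one_of_le₀ (mod_cast (Finset.mem_Icc.mp ht).2) n.cast_nonneg⟩
  have hint : ∀ v ∈ Icc (0:ℝ) 1, Integrable (Xt v 0) μ := fun v hv =>
    integrable_of_eLpNorm_le (hXtmeas v 0).aestronglyMeasurable hq (hM v hv)
  have hlaw : ∀ v ∈ Icc (0:ℝ) 1, ∀ k : ℕ, IdentDistrib (Xt v k) (Xt v 0) μ μ := fun v hv =>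
    (hstat v hv).toMeasurePreserving.identDistrib_shiftZ (hXtmeas v)
  have hKinf := hK.pos
  refine ⟨2 * Kinf * CB, by positivity, fun n hn b hb hnb u hu => ⟨?_, ?_⟩⟩
  · have hterm : ∀ t ∈ Finset.Icc 1 n,
        |(∫ ω, X n t ω ∂μ) - ∫ ω, Xt ((t : ℝ) / n) t ω ∂μ| ≤ CB * (n : ℝ) ^ (-α) := fun t ht =>
      abs_integral_sub_integral_le_of_eLpNorm_sub_le (hXmeas n t).aestronglyMeasurable
        ((hlaw _ (hgrid n t ht) t).integrable_iff.mpr (hint _ (hgrid n t ht))) hq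
        (by positivity) (happrox n hn t (Finset.mem_Icc.mp ht).1 (Finset.mem_Icc.mp ht).2)
    calc _ ≤ 2 * Kinf * (CB * (n : ℝ) ^ (-α)) :=
          abs_kernel_sum_le hb.1 hnb hK.bound hK.supp _ (by positivity) fun t ht _ => hterm t ht
      _ = 2 * Kinf * CB * (n : ℝ) ^ (-α) := by ring
  · have hterm : ∀ t ∈ Finset.Icc 1 n, |(t : ℝ) / n - u| ≤ b / 2 →
        |(∫ ω, Xt ((t : ℝ) / n) t ω ∂μ) - ∫ ω, Xt u 0 ω ∂μ| ≤ CB * b ^ α := by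
      intro t ht hloc
      rw [(hlaw _ (hgrid n t ht) t).integral_eq]
      calc _ ≤ CB * |(t : ℝ) / n - u| ^ α :=
            abs_integral_sub_integral_le_of_eLpNorm_sub_le (hXtmeas _ 0).aestronglyMeasurable
              (hint u hu) hq (by positivity) (hhoelder _ (hgrid n t ht) u hu 0)
        _ ≤ CB * b ^ α := by gcongr; linarith [hb.1]
    calc _ ≤ 2 * Kinf * (CB * b ^ α) :=
          abs_kernel_sum_le hb.1 hnb hK.bound hK.supp _
            (mul_nonneg hCB.le (Real.rpow_nonneg hb.1.le α)) hterm
      _ ≤ 2 * Kinf * CB * (b ^ α + (n : ℝ)⁻¹) := by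
          rw [← mul_assoc]
          gcongr
          exact le_add_of_nonneg_right (by positivity)

/-- **Deterministic bias expansion** (Proposition 3.3, first part): under (S1) with
`q ≥ 1`, `0 < α ≤ 1` and the kernel assumption, uniformly in `u ∈ [0,1]`:
`(1/n)∑ K_b(t/n−u)(E X_{t,n} − E X̃_t(t/n)) = O(n^{−α})` and
`(1/n)∑ K_b(t/n−u)(E X̃_t(t/n) − E X̃_0(u)) = O(b^α) + O(n⁻¹)`. -/
theorem deterministic_bias {Ω : Type*} [MeasurableSpace Ω] (μ : Measure Ω)
    [IsProbabilityMeasure μ]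
    (X : ℕ → ℕ → Ω → ℝ) (Xt : ℝ → ℤ → Ω → ℝ)
    (hXmeas : ∀ n t, Measurable (X n t))
    (hXtmeas : ∀ u t, Measurable (Xt u t))
    (hstat : ∀ u ∈ Icc (0:ℝ) 1, StatErg μ (fun t => Xt u t))
    (q : ℝ) (hq : 1 ≤ q)
    (α : ℝ) (hα : 0 < α) (hα1 : α ≤ 1) (CB : ℝ) (hCB : 0 < CB)
    -- (S1) :
    (hmom : ∃ M : ℝ, ∀ u ∈ Icc (0:ℝ) 1,
      eLpNorm (Xt u 0) (ENNReal.ofReal q) μ ≤ ENNReal.ofReal M)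
    (hhoelder : ∀ u ∈ Icc (0:ℝ) 1, ∀ v ∈ Icc (0:ℝ) 1, ∀ t : ℤ,
      eLpNorm (fun ω => Xt u t ω - Xt v t ω) (ENNReal.ofReal q) μ
        ≤ ENNReal.ofReal (CB * |u - v| ^ α))
    (happrox : ∀ n : ℕ, 1 ≤ n → ∀ t : ℕ, 1 ≤ t → t ≤ n →
      eLpNorm (fun ω => X n t ω - Xt ((t : ℝ) / (n : ℝ)) (t : ℤ) ω) (ENNReal.ofReal q) μ
        ≤ ENNReal.ofReal (CB * (n : ℝ) ^ (-α)))
    -- kernel :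
    (K : ℝ → ℝ) (Kinf BK : ℝ) (hK : KernelAssumption K Kinf BK) :
    ∃ C : ℝ, 0 < C ∧ ∀ n : ℕ, 1 ≤ n → ∀ b : ℝ, b ∈ Ioo (0:ℝ) 1 → 1 ≤ (n : ℝ) * b →
      ∀ u ∈ Icc (0:ℝ) 1,
        |(n : ℝ)⁻¹ * ∑ t ∈ Finset.Icc 1 n, b⁻¹ * K (((t : ℝ) / (n : ℝ) - u) / b)
            * ((∫ ω, X n t ω ∂μ) - ∫ ω, Xt ((t : ℝ) / (n : ℝ)) (t : ℤ) ω ∂μ)|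
          ≤ C * (n : ℝ) ^ (-α) ∧
        |(n : ℝ)⁻¹ * ∑ t ∈ Finset.Icc 1 n, b⁻¹ * K (((t : ℝ) / (n : ℝ) - u) / b)
            * ((∫ ω, Xt ((t : ℝ) / (n : ℝ)) (t : ℤ) ω ∂μ) - ∫ ω, Xt u 0 ω ∂μ)|
          ≤ C * (b ^ α + (n : ℝ)⁻¹) :=
  deterministic_bias_general μ X Xt hXmeas hXtmeas hstat q hq α hα CB hCB hmom hhoelder happrox K
    Kinf BK hK
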